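/- Lock-freeness is not preserved by PaI multicomposition, even under the no-mixed-state condition: there exist two communicating systems S_1 and S_2 over disjoint participant sets, a set of interfaces H = {h_1, h_2} for {S_1, S_2} such that neither interface has mixed states, a connection model CM for H, and a connection policy K for H complying with CM, such that S_1, S_2 and K are all lock-free, but the multicomposition MC({S_1, S_2}, K) is not lock-free (its initial configuration is an r-lock configuration for some participant r). -/

import Mathlib

namespace CFSM

/-- Direction of a communication action: output (`!`) or input (`?`). -/
inductive Dir : Type where
  | out : Dir
  | inp : Dir
deriving DecidableEq

instance instFintypeDir : Fintype Dir :=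
  ⟨{Dir.out, Dir.inp}, fun x => by cases x <;> simp⟩

/-- An action `pq!a` (output) or `pq?a` (input) over participants `P` and messages `A`:
`snd` is the sender `p`, `rcv` the receiver `q`, `msg` the message `a`. -/
structure Act (P : Type) (A : Type) : Type where
  snd : P
  rcv : P
  dir : Dir
  msg : A

instance {P A : Type} [Finite P] [Finite A] : Finite (Act P A) :=
  Finite.of_injective (fun l => (l.snd, l.rcv, l.dir, l.msg))
    (fun a b h => by
      cases a; cases b
      simp only [Prod.mk.injEq] at h
      obtain ⟨h1, h2, h3, h4⟩ := h
      subst h1; subst h2; subst h3; subst h4; rfl)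

/-- The subject of an action: the sender of an output, the receiver of an input. -/
def Act.subject {P A : Type} (l : Act P A) : P :=
  match l.dir with
  | .out => l.snd
  | .inp => l.rcv

/-- A communicating system over participants `P` and messages `A`:
one machine (state type, initial state and transition relation) per participant. -/
structure CS (P : Type) (A : Type) : Type 1 where
  St : P → Type
  init : ∀ p, St p
  delta : ∀ p, Set (St p × Act P A × St p)

/-- All actions of the machine of participant `p` have subject `p`
(the name of the machine) and distinct endpoints. -/
def CS.WellFormed {P A : Type} (S : CS P A) : Prop :=
  ∀ p t, t ∈ S.delta p → ((t.2.1 : Act P A).subject = p ∧ t.2.1.snd ≠ t.2.1.rcv)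

/-- A configuration: a local state for each machine and a FIFO buffer
for each ordered pair of participants. -/
structure Config {P A : Type} (S : CS P A) : Type where
  st : ∀ p, S.St p
  ch : P → P → List A

/-- The initial configuration: all machines in their initial state, all channels empty. -/
def CS.initConfig {P A : Type} (S : CS P A) : Config S :=
  ⟨S.init, fun _ _ => []⟩

/-- The labelled transition relation between configurations. -/
def StepL {P A : Type} (S : CS P A) (c : Config S) (l : Act P A) (c' : Config S) : Prop :=
  match l.dir with
  | .out =>
      (c.st l.snd, l, c'.st l.snd) ∈ S.delta l.snd ∧
      (∀ p, p ≠ l.snd → c'.st p = c.st p) ∧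
      c'.ch l.snd l.rcv = c.ch l.snd l.rcv ++ [l.msg] ∧
      (∀ p q, (p, q) ≠ (l.snd, l.rcv) → c'.ch p q = c.ch p q)
  | .inp =>
      (c.st l.rcv, l, c'.st l.rcv) ∈ S.delta l.rcv ∧
      (∀ p, p ≠ l.rcv → c'.st p = c.st p) ∧
      c.ch l.snd l.rcv = l.msg :: c'.ch l.snd l.rcv ∧
      (∀ p q, (p, q) ≠ (l.snd, l.rcv) → c'.ch p q = c.ch p q)

/-- Unlabelled transition relation. -/
def Step {P A : Type} (S : CS P A) (c c' : Config S) : Prop :=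
  ∃ l, StepL S c l c'

/-- Reachability between configurations. -/
def Reach {P A : Type} (S : CS P A) : Config S → Config S → Prop :=
  Relation.ReflTransGen (Step S)

/-- The set of configurations reachable from the initial configuration. -/
def RC {P A : Type} (S : CS P A) : Set (Config S) :=
  {c | Reach S S.initConfig c}

/-- A local state is final if it has no outgoing transition. -/
def FinalSt {Q P A : Type} (δ : Set (Q × Act P A × Q)) (q : Q) : Prop :=
  ∀ l q', (q, l, q') ∉ δ

/-- A local state is receiving if it is not final and all its outgoing
transitions are labelled with input actions. -/
def ReceivingSt {Q P A : Type} (δ : Set (Q × Act P A × Q)) (q : Q) : Prop :=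
  (∃ l q', (q, l, q') ∈ δ) ∧ ∀ l q', (q, l, q') ∈ δ → (l : Act P A).dir = Dir.inp

/-- A local state is mixed if it has at least one outgoing output-labelled
transition and at least one outgoing input-labelled transition. -/
def MixedSt {Q P A : Type} (δ : Set (Q × Act P A × Q)) (q : Q) : Prop :=
  (∃ l q', (q, l, q') ∈ δ ∧ (l : Act P A).dir = Dir.out) ∧
  (∃ l q', (q, l, q') ∈ δ ∧ (l : Act P A).dir = Dir.inp)

/-- A machine has no mixed states. -/
def NoMixed {Q P A : Type} (δ : Set (Q × Act P A × Q)) : Prop :=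
  ∀ q, ¬ MixedSt δ q

/-- Deadlock configuration: all channels empty but all machines in receiving states. -/
def DeadlockConfig {P A : Type} (S : CS P A) (c : Config S) : Prop :=
  (∀ p q, c.ch p q = []) ∧ ∀ p, ReceivingSt (S.delta p) (c.st p)

def DeadlockFree {P A : Type} (S : CS P A) : Prop :=
  ∀ c ∈ RC S, ¬ DeadlockConfig S c

/-- Orphan-message configuration: all machines final but some channel nonempty. -/
def OrphanConfig {P A : Type} (S : CS P A) (c : Config S) : Prop :=
  (∀ p, FinalSt (S.delta p) (c.st p)) ∧ ∃ p q, c.ch p q ≠ []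

def OrphanFree {P A : Type} (S : CS P A) : Prop :=
  ∀ c ∈ RC S, ¬ OrphanConfig S c

/-- Unspecified reception configuration: some machine `r` is in a receiving state and,
for every input transition of `r`, the corresponding channel is nonempty with a
first element different from the expected message. -/
def URConfig {P A : Type} (S : CS P A) (c : Config S) : Prop :=
  ∃ r, ReceivingSt (S.delta r) (c.st r) ∧
    ∀ s a q', (c.st r, Act.mk s r Dir.inp a, q') ∈ S.delta r →
      (c.ch s r ≠ [] ∧ ¬ ∃ w, c.ch s r = a :: w)

def ReceptionErrorFree {P A : Type} (S : CS P A) : Prop :=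
  ∀ c ∈ RC S, ¬ URConfig S c

/-- Progress: every reachable configuration has an outgoing transition or all
machines are in final states. -/
def ProgressProp {P A : Type} (S : CS P A) : Prop :=
  ∀ c ∈ RC S, (∃ c', Step S c c') ∨ ∀ p, FinalSt (S.delta p) (c.st p)

/-- `p`-lock configuration: `p` is in a receiving state and never occurs as the
subject of an action in any transition sequence from `c`. -/
def PLockConfig {P A : Type} (S : CS P A) (c : Config S) (p : P) : Prop :=
  ReceivingSt (S.delta p) (c.st p) ∧
  ∀ c1 l c2, Reach S c c1 → StepL S c1 l c2 → l.subject ≠ p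

def LockFree {P A : Type} (S : CS P A) : Prop :=
  ∀ c ∈ RC S, ∀ p, ¬ PLockConfig S c p

section Composition

variable {I : Type} {P : I → Type} {A : Type}

/-- Messages occurring in input actions of the machine of `p`. -/
def inMsgs {Pp A : Type} (S : CS Pp A) (p : Pp) : Set A :=
  {a | ∃ q s q', (q, Act.mk s p Dir.inp a, q') ∈ S.delta p}

/-- Messages occurring in output actions of the machine of `p`. -/
def outMsgs {Pp A : Type} (S : CS Pp A) (p : Pp) : Set A :=
  {a | ∃ q r q', (q, Act.mk p r Dir.out a, q') ∈ S.delta p}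

/-- `CM` is a connection model for the interfaces `hh i` of the family `S`
(the interface `h_i` is represented by its index `i`). -/
def IsConnModel (S : ∀ i, CS (P i) A) (hh : ∀ i, P i) (CM : Set (I × A × I)) : Prop :=
  ∀ i a,
    (a ∈ inMsgs (S i) (hh i) →
      ∃ j, j ≠ i ∧ a ∈ outMsgs (S j) (hh j) ∧ (i, a, j) ∈ CM) ∧
    (a ∈ outMsgs (S i) (hh i) →
      ∃ j, j ≠ i ∧ a ∈ inMsgs (S j) (hh j) ∧ (j, a, i) ∈ CM)

/-- `CM` is a strong connection model: additionally the connecting partner is unique. -/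
def IsStrongConnModel (S : ∀ i, CS (P i) A) (hh : ∀ i, P i) (CM : Set (I × A × I)) : Prop :=
  IsConnModel S hh CM ∧
  ∀ i a,
    (a ∈ inMsgs (S i) (hh i) → ∃! j, (i, a, j) ∈ CM) ∧
    (a ∈ outMsgs (S i) (hh i) → ∃! j, (j, a, i) ∈ CM)

/-- Conditions (*) and (**) for a candidate transition relation `d` of the local
connection policy of interface `hh i` (the name `k_i` is represented by `i`). -/
def PolicySat (S : ∀ i, CS (P i) A) (hh : ∀ i, P i) (CM : Set (I × A × I)) (i : I)
    (d : Set ((S i).St (hh i) × Act I A × (S i).St (hh i))) : Prop :=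
  (∀ q r a q', (q, Act.mk r (hh i) Dir.inp a, q') ∈ (S i).delta (hh i) →
      ∃ j, j ≠ i ∧ (i, a, j) ∈ CM ∧ (q, Act.mk i j Dir.out a, q') ∈ d) ∧
  (∀ q r a q', (q, Act.mk (hh i) r Dir.out a, q') ∈ (S i).delta (hh i) →
      ∃ j, j ≠ i ∧ (j, a, i) ∈ CM ∧ (q, Act.mk j i Dir.inp a, q') ∈ d)

/-- `d` belongs to the local connection policy set `IS(M_{h_i}, CM)`:
it is a minimal relation satisfying (*) and (**).  (The states `q̇` of the
policy machine are identified with the states `q` of `M_{h_i}`.) -/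
def InIS (S : ∀ i, CS (P i) A) (hh : ∀ i, P i) (CM : Set (I × A × I)) (i : I)
    (d : Set ((S i).St (hh i) × Act I A × (S i).St (hh i))) : Prop :=
  PolicySat S hh CM i d ∧ ∀ d', d' ⊆ d → PolicySat S hh CM i d' → d' = d

/-- The communicating system (over the participant type `I` of names `k_i`)
determined by the family of transition relations `Kd` of a connection policy. -/
def policyCS (S : ∀ i, CS (P i) A) (hh : ∀ i, P i)
    (Kd : ∀ i, Set ((S i).St (hh i) × Act I A × (S i).St (hh i))) : CS I A where
  St := fun i => (S i).St (hh i)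
  init := fun i => (S i).init (hh i)
  delta := Kd

/-- `Kd` is a connection policy for the interfaces `hh` complying with `CM`. -/
def IsConnPolicy (S : ∀ i, CS (P i) A) (hh : ∀ i, P i) (CM : Set (I × A × I))
    (Kd : ∀ i, Set ((S i).St (hh i) × Act I A × (S i).St (hh i))) : Prop :=
  ∀ i, InIS S hh CM i (Kd i)

/-- States of the gateway for interface `hh i`: the original states plus one
fresh state per transition of `M_{h_i}`. -/
abbrev GWState (S : ∀ i, CS (P i) A) (hh : ∀ i, P i) (i : I) : Type :=
  (S i).St (hh i) ⊕ ((S i).St (hh i) × Act (P i) A × (S i).St (hh i))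

/-- Lifting of a local action of system `i` to the composed participant type. -/
def liftAct (i : I) (l : Act (P i) A) : Act ((j : I) × P j) A :=
  Act.mk ⟨i, l.snd⟩ ⟨i, l.rcv⟩ l.dir l.msg

/-- Transition relation of the gateway `M_{h_i} ⟲ M_{k_i}`. -/
def GWdelta (S : ∀ i, CS (P i) A) (hh : ∀ i, P i)
    (Kd : ∀ i, Set ((S i).St (hh i) × Act I A × (S i).St (hh i))) (i : I) :
    Set (GWState S hh i × Act ((j : I) × P j) A × GWState S hh i) :=
  {x | ∃ q a q',
    (∃ s r, (q, Act.mk (hh i) s Dir.out a, q') ∈ (S i).delta (hh i) ∧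
        (q, Act.mk r i Dir.inp a, q') ∈ Kd i ∧
        (x = (Sum.inl q, Act.mk ⟨r, hh r⟩ ⟨i, hh i⟩ Dir.inp a,
              Sum.inr (q, Act.mk (hh i) s Dir.out a, q')) ∨
         x = (Sum.inr (q, Act.mk (hh i) s Dir.out a, q'),
              Act.mk ⟨i, hh i⟩ ⟨i, s⟩ Dir.out a, Sum.inl q'))) ∨
    (∃ s r, (q, Act.mk s (hh i) Dir.inp a, q') ∈ (S i).delta (hh i) ∧
        (q, Act.mk i r Dir.out a, q') ∈ Kd i ∧
        (x = (Sum.inl q, Act.mk ⟨i, s⟩ ⟨i, hh i⟩ Dir.inp a,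
              Sum.inr (q, Act.mk s (hh i) Dir.inp a, q')) ∨
         x = (Sum.inr (q, Act.mk s (hh i) Dir.inp a, q'),
              Act.mk ⟨i, hh i⟩ ⟨r, hh r⟩ Dir.out a, Sum.inl q')))}

open Classical in
/-- State type of the machine of participant `⟨i, p⟩` in the multicomposition:
the gateway state type if `p` is the interface of system `i`, the original
state type otherwise. -/
noncomputable def MCSt (S : ∀ i, CS (P i) A) (hh : ∀ i, P i) (x : (i : I) × P i) : Type :=
  if x.2 = hh x.1 then GWState S hh x.1 else (S x.1).St x.2

/-- The multicomposition `MC({S_i}, K)`: all machines of the single systems,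
with the machine of each interface `hh i` replaced by its gateway. -/
noncomputable def MC (S : ∀ i, CS (P i) A) (hh : ∀ i, P i)
    (Kd : ∀ i, Set ((S i).St (hh i) × Act I A × (S i).St (hh i))) :
    CS ((i : I) × P i) A where
  St := MCSt S hh
  init := fun x => by
    by_cases hp : x.2 = hh x.1
    · have h : MCSt S hh x = GWState S hh x.1 := by simp [MCSt, hp]
      rw [h]; exact Sum.inl ((S x.1).init (hh x.1))
    · have h : MCSt S hh x = (S x.1).St x.2 := by simp [MCSt, hp]
      rw [h]; exact (S x.1).init x.2
  delta := fun x => by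
    by_cases hp : x.2 = hh x.1
    · have h : MCSt S hh x = GWState S hh x.1 := by simp [MCSt, hp]
      rw [h]; exact GWdelta S hh Kd x.1
    · have h : MCSt S hh x = (S x.1).St x.2 := by simp [MCSt, hp]
      rw [h]
      exact {t | ∃ q l q', (q, l, q') ∈ (S x.1).delta x.2 ∧ t = (q, liftAct x.1 l, q')}

/-- The state of the gateway of interface `hh i` in a configuration of the
multicomposition, as an element of `GWState`. -/
noncomputable def toGW (S : ∀ i, CS (P i) A) (hh : ∀ i, P i) (i : I)
    (x : MCSt S hh ⟨i, hh i⟩) : GWState S hh i :=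
  cast (by simp [MCSt]) x

/-- The state of a non-interface participant in a configuration of the
multicomposition, as an element of its original state type. -/
noncomputable def toLoc (S : ∀ i, CS (P i) A) (hh : ∀ i, P i) {i : I} {p : P i}
    (hp : p ≠ hh i) (x : MCSt S hh ⟨i, p⟩) : (S i).St p :=
  cast (by simp [MCSt, hp]) x

/-- Projection of a configuration of the multicomposition to system `S i`,
assuming the gateway state of `hh i` is not a fresh intermediate state
(i.e. it is of the form `Sum.inl q`). -/
noncomputable def projSys (S : ∀ i, CS (P i) A) (hh : ∀ i, P i)
    (Kd : ∀ i, Set ((S i).St (hh i) × Act I A × (S i).St (hh i)))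
    (i : I) (s : Config (MC S hh Kd))
    (hq : ∃ q, toGW S hh i (s.st ⟨i, hh i⟩) = Sum.inl q) : Config (S i) where
  st := fun p => by
    by_cases hp : p = hh i
    · rw [hp]; exact hq.choose
    · exact toLoc S hh hp (s.st ⟨i, p⟩)
  ch := fun p q => s.ch ⟨i, p⟩ ⟨i, q⟩

/-- Projection of a configuration of the multicomposition to the connection
policy `K`, assuming no gateway is in a fresh intermediate state. -/
noncomputable def projPolicy (S : ∀ i, CS (P i) A) (hh : ∀ i, P i)
    (Kd : ∀ i, Set ((S i).St (hh i) × Act I A × (S i).St (hh i)))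
    (s : Config (MC S hh Kd))
    (hq : ∀ i, ∃ q, toGW S hh i (s.st ⟨i, hh i⟩) = Sum.inl q) :
    Config (policyCS S hh Kd) where
  st := fun i => (hq i).choose
  ch := fun i j => s.ch ⟨i, hh i⟩ ⟨j, hh j⟩

end Composition

end CFSM

/-
In `S₁` the interface `h₁` sends `a` to `p` any number of times and, once, `c` to `w`; in `S₂`
the participant `s` only ever sends `a` to the interface `h₂`, which is willing to receive both
`a` and `c`. Each system is lock-free, and so is the policy `K`, since its machine `k₂` (the dual
of `h₂`) may freely emit `c`. In the multicomposition, however, a gateway only forwards messages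
it has received, so a message that no non-interface participant ever sends never appears in a
channel. Since `s` never sends `c`, the participant `w`, which waits for `c` from the start, is
locked in the initial configuration.
-/

namespace CFSM

theorem noMixed_of_forall_dir {Q P A : Type} {δ : Set (Q × Act P A × Q)} {d : Dir}
    (h : ∀ q l q', (q, l, q') ∈ δ → l.dir = d) : NoMixed δ := by
  rintro q ⟨⟨l, q', hl, hout⟩, ⟨l', q'', hl', hinp⟩⟩
  have h₁ := h _ _ _ hl
  have h₂ := h _ _ _ hl'
  simp_all

section Reachability

variable {P A : Type}

def CanAct (S : CS P A) (c : Config S) (p : P) : Prop :=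
  ∃ c₁ l c₂, Reach S c c₁ ∧ StepL S c₁ l c₂ ∧ l.subject = p

theorem CanAct.of_reach {S : CS P A} {c c' : Config S} {p : P} (h : Reach S c c')
    (hp : CanAct S c' p) : CanAct S c p :=
  let ⟨c₁, l, c₂, hr, hs, hl⟩ := hp
  ⟨c₁, l, c₂, h.trans hr, hs, hl⟩

theorem lockFree_of_canAct {S : CS P A}
    (h : ∀ c ∈ RC S, ∀ p, ReceivingSt (S.delta p) (c.st p) → CanAct S c p) : LockFree S :=
  fun c hc p ⟨hrecv, hnever⟩ =>
    let ⟨c₁, l, c₂, hr, hs, hl⟩ := h c hc p hrecv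
    hnever c₁ l c₂ hr hs hl

theorem invariant_of_mem_RC {S : CS P A} (Inv : Config S → Prop) (h₀ : Inv S.initConfig)
    (hstep : ∀ c c', Inv c → Step S c c' → Inv c') {c : Config S} (hc : c ∈ RC S) : Inv c := by
  induction hc with
  | refl => exact h₀
  | tail _ hs ih => exact hstep _ _ ih hs

theorem pLockConfig_of_input_never_buffered {S : CS P A} {c : Config S} {r : P} {m : A}
    (hrecv : ReceivingSt (S.delta r) (c.st r))
    (hr : ∀ q l q', (q, l, q') ∈ S.delta r → l.dir = .inp ∧ l.msg = m)
    (hm : ∀ c', Reach S c c' → ∀ x y, m ∉ c'.ch x y) : PLockConfig S c r := by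
  refine ⟨hrecv, fun c₁ ⟨s, r', dir, a⟩ c₂ hreach hstep hsub => ?_⟩
  cases dir
  · obtain rfl : s = r := hsub
    exact absurd (hr _ _ _ hstep.1).1 (by simp)
  · obtain rfl : r' = r := hsub
    obtain ⟨-, rfl⟩ := hr _ _ _ hstep.1
    exact hm c₁ hreach s r' (hstep.2.2.1 ▸ List.mem_cons_self ..)

variable [DecidableEq P]

theorem exists_stepL_out {S : CS P A} (c : Config S) {s r : P} {m : A} {q : S.St s}
    (hd : (c.st s, ⟨s, r, .out, m⟩, q) ∈ S.delta s) :
    ∃ c', StepL S c ⟨s, r, .out, m⟩ c' ∧ (∀ p, p ≠ s → c'.st p = c.st p) ∧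
      c'.ch s r = c.ch s r ++ [m] :=
  ⟨⟨Function.update c.st s q, fun x y => if (x, y) = (s, r) then c.ch s r ++ [m] else c.ch x y⟩,
    ⟨by simpa using hd, fun p hp => Function.update_of_ne hp _ _, by simp,
      fun x y h => by simp [h]⟩,
    fun p hp => Function.update_of_ne hp _ _, by simp⟩

theorem canAct_of_receive {S : CS P A} {c : Config S} {s r : P} {m : A} {w : List A}
    {q : S.St r} (hch : c.ch s r = m :: w) (hd : (c.st r, ⟨s, r, .inp, m⟩, q) ∈ S.delta r) :
    CanAct S c r :=
  ⟨c, ⟨s, r, .inp, m⟩,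
    ⟨Function.update c.st r q, fun x y => if (x, y) = (s, r) then w else c.ch x y⟩,
    .refl, ⟨by simpa using hd, fun p hp => Function.update_of_ne hp _ _, by simpa using hch,
      fun x y h => by simp [h]⟩, rfl⟩

theorem canAct_of_send_receive {S : CS P A} {c : Config S} {s r : P} {m : A} {q : S.St s}
    (hsr : s ≠ r) (hs : (c.st s, ⟨s, r, .out, m⟩, q) ∈ S.delta s)
    (hr : ∀ x ∈ c.ch s r ++ [m], ∃ q', (c.st r, ⟨s, r, .inp, x⟩, q') ∈ S.delta r) :
    CanAct S c r := by
  obtain ⟨c', hstep, hst, hch⟩ := exists_stepL_out c hs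
  have hne : c'.ch s r ≠ [] := by simp [hch]
  obtain ⟨q', hq'⟩ := hr (c'.ch s r |>.head hne) (hch ▸ List.head_mem hne)
  refine CanAct.of_reach (.single ⟨_, hstep⟩)
    (canAct_of_receive (q := q') (List.cons_head_tail hne).symm ?_)
  rwa [hst r hsr.symm]

end Reachability

section Multicomposition

theorem mem_eqMpr_iff {X Y L : Type} (h : X = Y) (e : Set (X × L × X) = Set (Y × L × Y))
    (D : Set (Y × L × Y)) (q q' : X) (l : L) :
    (q, l, q') ∈ e.mpr D ↔ (cast h q, l, cast h q') ∈ D := by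
  subst h; rfl

variable {I : Type} {P : I → Type} {A : Type} (S : ∀ i, CS (P i) A) (hh : ∀ i, P i)
  (Kd : ∀ i, Set ((S i).St (hh i) × Act I A × (S i).St (hh i)))

theorem mem_MC_delta_interface (i : I) (q q' : (MC S hh Kd).St ⟨i, hh i⟩)
    (l : Act ((j : I) × P j) A) :
    (q, l, q') ∈ (MC S hh Kd).delta ⟨i, hh i⟩ ↔
      (toGW S hh i q, l, toGW S hh i q') ∈ GWdelta S hh Kd i := by
  unfold MC
  dsimp only
  rw [dif_pos rfl]
  exact mem_eqMpr_iff _ _ _ _ _ _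

theorem mem_MC_delta_of_ne {i : I} {p : P i} (hp : p ≠ hh i) (q q' : (MC S hh Kd).St ⟨i, p⟩)
    (l : Act ((j : I) × P j) A) :
    (q, l, q') ∈ (MC S hh Kd).delta ⟨i, p⟩ ↔
      ∃ l₀, (toLoc S hh hp q, l₀, toLoc S hh hp q') ∈ (S i).delta p ∧ l = liftAct i l₀ := by
  unfold MC
  dsimp only
  rw [dif_neg hp]
  refine (mem_eqMpr_iff (by simp [MCSt, hp]) _ _ _ _ _).trans ⟨?_, ?_⟩
  · rintro ⟨q₀, l₀, q₀', hmem, heq⟩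
    simp only [Prod.mk.injEq] at heq
    obtain ⟨rfl, rfl, rfl⟩ := heq
    exact ⟨l₀, hmem, rfl⟩
  · rintro ⟨l₀, hmem, rfl⟩
    exact ⟨_, l₀, _, hmem, rfl⟩

theorem toGW_MC_init (i : I) :
    toGW S hh i ((MC S hh Kd).init ⟨i, hh i⟩) = .inl ((S i).init (hh i)) := by
  unfold MC
  dsimp only
  rw [dif_pos rfl]
  simp [toGW, eq_mpr_eq_cast]

theorem toLoc_MC_init {i : I} {p : P i} (hp : p ≠ hh i) :
    toLoc S hh hp ((MC S hh Kd).init ⟨i, p⟩) = (S i).init p := by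
  unfold MC
  dsimp only
  rw [dif_neg hp]
  simp [toLoc, eq_mpr_eq_cast]

theorem receivingSt_MC_of_ne {i : I} {p : P i} (hp : p ≠ hh i) {q : (MC S hh Kd).St ⟨i, p⟩}
    (h : ReceivingSt ((S i).delta p) (toLoc S hh hp q)) :
    ReceivingSt ((MC S hh Kd).delta ⟨i, p⟩) q := by
  obtain ⟨⟨l₀, q₀, hq₀⟩, hinp⟩ := h
  have hcast : (S i).St p = (MC S hh Kd).St ⟨i, p⟩ := by simp [MC, MCSt, hp]
  refine ⟨⟨liftAct i l₀, cast hcast q₀, (mem_MC_delta_of_ne S hh Kd hp _ _ _).2 ⟨l₀, ?_, rfl⟩⟩, ?_⟩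
  · convert hq₀ using 3
    exact cast_cast _ _ _
  · intro l q' hl
    obtain ⟨l₀, hmem, rfl⟩ := (mem_MC_delta_of_ne S hh Kd hp _ _ _).1 hl
    exact hinp _ _ hmem

variable {S hh Kd}

theorem mem_GWdelta_out {i : I} {g g' : GWState S hh i} {l : Act ((j : I) × P j) A}
    (h : (g, l, g') ∈ GWdelta S hh Kd i) (hl : l.dir = .out) :
    (∃ t, g = .inr t ∧ t.2.1.msg = l.msg) ∧ ∃ q, g' = .inl q := by
  obtain ⟨q, a, q', ⟨s, r, -, -, h | h⟩ | ⟨s, r, -, -, h | h⟩⟩ := h <;>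
    simp only [Prod.mk.injEq] at h <;> obtain ⟨rfl, rfl, rfl⟩ := h <;> simp_all

theorem mem_GWdelta_inp {i : I} {g g' : GWState S hh i} {l : Act ((j : I) × P j) A}
    (h : (g, l, g') ∈ GWdelta S hh Kd i) (hl : l.dir = .inp) :
    ∃ t, g' = .inr t ∧ t.2.1.msg = l.msg := by
  obtain ⟨q, a, q', ⟨s, r, -, -, h | h⟩ | ⟨s, r, -, -, h | h⟩⟩ := h <;>
    simp only [Prod.mk.injEq] at h <;> obtain ⟨rfl, rfl, rfl⟩ := h <;> simp_all

variable (S hh Kd) in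
/-- A gateway in the fresh state `q^t` has consumed the message of `t` and still has to forward
it, so it counts as holding that message. -/
def GatewaysAvoid (m : A) (c : Config (MC S hh Kd)) : Prop :=
  ∀ i t, toGW S hh i (c.st ⟨i, hh i⟩) = .inr t → t.2.1.msg ≠ m

variable (S hh Kd) in
def NotInTransit (m : A) (c : Config (MC S hh Kd)) : Prop :=
  (∀ x y, m ∉ c.ch x y) ∧ GatewaysAvoid S hh Kd m c

theorem GatewaysAvoid.of_frame {m : A} {c c' : Config (MC S hh Kd)} {x : (i : I) × P i}
    (hc : GatewaysAvoid S hh Kd m c) (hst : ∀ y, y ≠ x → c'.st y = c.st y)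
    (hx : ∀ i, x = ⟨i, hh i⟩ → ∀ t, toGW S hh i (c'.st ⟨i, hh i⟩) = .inr t → t.2.1.msg ≠ m) :
    GatewaysAvoid S hh Kd m c' := by
  intro i t ht
  by_cases hxi : x = ⟨i, hh i⟩
  · exact hx i hxi t ht
  · rw [hst _ (Ne.symm hxi)] at ht
    exact hc i t ht

theorem NotInTransit.stepL_out {m : A}
    (hm : ∀ i p, p ≠ hh i → ∀ q l q', (q, l, q') ∈ (S i).delta p → l.dir = .out → l.msg ≠ m)
    {c c' : Config (MC S hh Kd)} {i : I} {p : P i} {y : (j : I) × P j} {a : A}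
    (hc : NotInTransit S hh Kd m c) (hl : StepL (MC S hh Kd) c ⟨⟨i, p⟩, y, .out, a⟩ c') :
    NotInTransit S hh Kd m c' := by
  obtain ⟨hch, hgw⟩ := hc
  obtain ⟨hd, hst, hsnd, hoth⟩ := hl
  have hsender : a ≠ m ∧ ∀ k, (⟨i, p⟩ : (j : I) × P j) = ⟨k, hh k⟩ →
      ∀ t, toGW S hh k (c'.st ⟨k, hh k⟩) = .inr t → t.2.1.msg ≠ m := by
    by_cases hp : p = hh i
    · subst hp
      obtain ⟨⟨t, ht, hmsg⟩, q, hq⟩ :=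
        mem_GWdelta_out ((mem_MC_delta_interface S hh Kd i _ _ _).1 hd) rfl
      refine ⟨fun h => hgw i t ht (hmsg.trans h), fun k hk t' ht' => ?_⟩
      obtain ⟨rfl, -⟩ := Sigma.mk.inj_iff.1 hk
      simp [hq] at ht'
    · obtain ⟨l₀, hmem, hl₀⟩ := (mem_MC_delta_of_ne S hh Kd hp _ _ _).1 hd
      simp only [liftAct, Act.mk.injEq] at hl₀
      refine ⟨hl₀.2.2.2 ▸ hm i p hp _ _ _ hmem hl₀.2.2.1.symm, fun k hk => ?_⟩
      obtain ⟨rfl, h⟩ := Sigma.mk.inj_iff.1 hk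
      exact absurd (eq_of_heq h) hp
  refine ⟨fun x z => ?_, hgw.of_frame hst hsender.2⟩
  by_cases hxz : (x, z) = (⟨i, p⟩, y)
  · obtain ⟨rfl, rfl⟩ := Prod.mk.inj hxz
    simpa [hsnd, hch] using hsender.1.symm
  · rw [hoth x z hxz]
    exact hch x z

theorem NotInTransit.stepL_inp {m : A} {c c' : Config (MC S hh Kd)} {x : (j : I) × P j}
    {i : I} {p : P i} {a : A}
    (hc : NotInTransit S hh Kd m c) (hl : StepL (MC S hh Kd) c ⟨x, ⟨i, p⟩, .inp, a⟩ c') :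
    NotInTransit S hh Kd m c' := by
  obtain ⟨hch, hgw⟩ := hc
  obtain ⟨hd, hst, hrcv, hoth⟩ := hl
  have ha : a ≠ m := fun h => hch x ⟨i, p⟩ (by simp [hrcv, h])
  refine ⟨fun y z => ?_, hgw.of_frame hst fun k hk t ht => ?_⟩
  · by_cases hyz : (y, z) = (x, ⟨i, p⟩)
    · obtain ⟨rfl, rfl⟩ := Prod.mk.inj hyz
      exact fun h => hch y _ (by rw [hrcv]; exact List.mem_cons_of_mem _ h)
    · rw [hoth y z hyz]
      exact hch y z
  · obtain ⟨rfl, h⟩ := Sigma.mk.inj_iff.1 hk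
    obtain rfl := eq_of_heq h
    obtain ⟨t', ht', hmsg⟩ := mem_GWdelta_inp ((mem_MC_delta_interface S hh Kd _ _ _ _).1 hd) rfl
    rw [ht', Sum.inr.injEq] at ht
    exact ht ▸ fun h => ha (hmsg.symm.trans h)

theorem notInTransit_of_mem_RC {m : A}
    (hm : ∀ i p, p ≠ hh i → ∀ q l q', (q, l, q') ∈ (S i).delta p → l.dir = .out → l.msg ≠ m)
    {c : Config (MC S hh Kd)} (hc : c ∈ RC (MC S hh Kd)) : NotInTransit S hh Kd m c := by
  refine invariant_of_mem_RC _ ⟨fun _ _ => by simp [CS.initConfig],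
    fun i t ht => by simp [CS.initConfig, toGW_MC_init] at ht⟩ (fun _ _ h hs => ?_) hc
  obtain ⟨⟨⟨i, p⟩, ⟨j, p'⟩, dir, a⟩, hl⟩ := hs
  cases dir
  · exact h.stepL_out hm hl
  · exact h.stepL_inp hl

end Multicomposition

section PairPolicy

variable {P : Bool → Type} {A : Type} (S : ∀ b, CS (P b) A) (hh : ∀ b, P b)

/-- With only two interfaces, the partner `p` in (*) and (**) is forced to be `!b`. -/
def pairPolicy (b : Bool) : Set ((S b).St (hh b) × Act Bool A × (S b).St (hh b)) :=
  {t | ∃ q a q', ((∃ r, (q, ⟨r, hh b, .inp, a⟩, q') ∈ (S b).delta (hh b)) ∧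
        t = (q, ⟨b, !b, .out, a⟩, q')) ∨
      ((∃ r, (q, ⟨hh b, r, .out, a⟩, q') ∈ (S b).delta (hh b)) ∧
        t = (q, ⟨!b, b, .inp, a⟩, q'))}

theorem inIS_pairPolicy {CM : Set (Bool × A × Bool)} {b : Bool}
    (hin : ∀ a ∈ inMsgs (S b) (hh b), (b, a, !b) ∈ CM)
    (hout : ∀ a ∈ outMsgs (S b) (hh b), (!b, a, b) ∈ CM) :
    InIS S hh CM b (pairPolicy S hh b) := by
  refine ⟨⟨fun q r a q' hq => ⟨!b, Bool.not_ne_self b, hin a ⟨q, r, q', hq⟩,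
      q, a, q', .inl ⟨⟨r, hq⟩, rfl⟩⟩, fun q r a q' hq => ⟨!b, Bool.not_ne_self b,
      hout a ⟨q, r, q', hq⟩, q, a, q', .inr ⟨⟨r, hq⟩, rfl⟩⟩⟩, fun d hsub hsat => ?_⟩
  refine hsub.antisymm fun t ⟨q, a, q', ht⟩ => ?_
  rcases ht with ⟨⟨r, hq⟩, rfl⟩ | ⟨⟨r, hq⟩, rfl⟩
  · obtain ⟨j, hj, -, hd⟩ := hsat.1 q r a q' hq
    rwa [Bool.eq_not_of_ne hj] at hd
  · obtain ⟨j, hj, -, hd⟩ := hsat.2 q r a q' hq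
    rwa [Bool.eq_not_of_ne hj] at hd

end PairPolicy

namespace LockCounterexample

inductive Msg : Type where
  | a : Msg
  | c : Msg
deriving DecidableEq

instance : Fintype Msg :=
  ⟨{.a, .c}, fun x => by cases x <;> simp⟩

/- Participants of `sys₁`: 0 = `h₁`, 1 = `p`, 2 = `w`; of `sys₂`: 0 = `h₂`, 1 = `s`, 2 idle.
State `true` of `h₁` (resp. `h₂`, `w`) records that `c` has been sent (resp. received). -/
abbrev sys₁ : CS (Fin 3) Msg where
  St _ := Bool
  init _ := false
  delta
    | 0 => {(false, ⟨0, 1, .out, .a⟩, false), (false, ⟨0, 2, .out, .c⟩, true),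
        (true, ⟨0, 1, .out, .a⟩, true)}
    | 1 => {(false, ⟨0, 1, .inp, .a⟩, false)}
    | 2 => {(false, ⟨0, 2, .inp, .c⟩, true)}

abbrev sys₂ : CS (Fin 3) Msg where
  St _ := Bool
  init _ := false
  delta
    | 0 => {(false, ⟨1, 0, .inp, .a⟩, false), (false, ⟨1, 0, .inp, .c⟩, true),
        (true, ⟨1, 0, .inp, .a⟩, true)}
    | 1 => {(false, ⟨1, 0, .out, .a⟩, false)}
    | 2 => ∅

abbrev sys : (b : Bool) → CS (Fin 3) Msg
  | false => sys₁
  | true => sys₂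

abbrev iface (_ : Bool) : Fin 3 := 0

def connModel : Set (Bool × Msg × Bool) := {x | x.1 = true ∧ x.2.2 = false}

abbrev policy := pairPolicy sys iface

theorem sys_wellFormed (b : Bool) : (sys b).WellFormed := by
  rintro p ⟨q, l, q'⟩ ht
  cases b <;> fin_cases p <;> simp [sys, sys₁, sys₂] at ht <;>
    rcases ht with ⟨_, rfl, _⟩ | ⟨_, rfl, _⟩ | ⟨_, rfl, _⟩ <;> simp_all [Act.subject]

theorem sys_noMixed (b : Bool) : NoMixed ((sys b).delta (iface b)) := by
  cases b
  · exact noMixed_of_forall_dir (d := .out) fun q l q' h => by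
      simp [sys, sys₁, iface] at h; rcases h with ⟨-, rfl, -⟩ | ⟨-, rfl, -⟩ | ⟨-, rfl, -⟩ <;> rfl
  · exact noMixed_of_forall_dir (d := .inp) fun q l q' h => by
      simp [sys, sys₂, iface] at h; rcases h with ⟨-, rfl, -⟩ | ⟨-, rfl, -⟩ | ⟨-, rfl, -⟩ <;> rfl

theorem mem_inMsgs_h₂ (m : Msg) : m ∈ inMsgs (sys true) (iface true) := by
  cases m
  · exact ⟨false, 1, false, by simp [sys, sys₂, iface]⟩
  · exact ⟨false, 1, true, by simp [sys, sys₂, iface]⟩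

theorem not_mem_inMsgs_h₁ (m : Msg) : m ∉ inMsgs (sys false) (iface false) := by
  rintro ⟨q, s, q', h⟩
  simp [sys, sys₁, iface] at h

theorem not_mem_outMsgs_h₂ (m : Msg) : m ∉ outMsgs (sys true) (iface true) := by
  rintro ⟨q, r, q', h⟩
  simp [sys, sys₂, iface] at h

theorem isConnModel : IsConnModel sys iface connModel := by
  rintro (_ | _) m
  · exact ⟨fun h => absurd h (not_mem_inMsgs_h₁ m),
      fun _ => ⟨true, by decide, mem_inMsgs_h₂ m, rfl, rfl⟩⟩
  · refine ⟨fun _ => ⟨false, by decide, ?_, rfl, rfl⟩, fun h => absurd h (not_mem_outMsgs_h₂ m)⟩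
    cases m
    · exact ⟨false, 1, false, by simp [sys, sys₁, iface]⟩
    · exact ⟨false, 2, true, by simp [sys, sys₁, iface]⟩

theorem isConnPolicy : IsConnPolicy sys iface connModel policy := by
  rintro (_ | _)
  · exact inIS_pairPolicy sys iface (fun m h => absurd h (not_mem_inMsgs_h₁ m))
      fun _ _ => ⟨rfl, rfl⟩
  · exact inIS_pairPolicy sys iface (fun _ _ => ⟨rfl, rfl⟩)
      fun m h => absurd h (not_mem_outMsgs_h₂ m)

/-- The last conjunct counts the single `c` that `h₁` may send: it is in the channel to `w`
or has been received. -/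
def Inv₁ (c : Config sys₁) : Prop :=
  (∀ x ∈ c.ch 0 1, x = .a) ∧ (∀ x ∈ c.ch 0 2, x = .c) ∧
    (c.ch 0 2).length + Bool.toNat (c.st 2) = Bool.toNat (c.st 0)

theorem Inv₁.step {c c' : Config sys₁} (hc : Inv₁ c) (hs : Step sys₁ c c') : Inv₁ c' := by
  obtain ⟨h01, h02, hlen⟩ := hc
  obtain ⟨⟨s, r, dir, m⟩, hl⟩ := hs
  cases dir <;> obtain ⟨hd, hst, hch, hoth⟩ := hl <;> simp only at hd hst hch hoth
  · fin_cases s <;> simp at hd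
    rcases hd with ⟨h0, ⟨rfl, rfl⟩, h0'⟩ | ⟨h0, ⟨rfl, rfl⟩, h0'⟩ | ⟨h0, ⟨rfl, rfl⟩, h0'⟩ <;>
      refine ⟨?_, ?_, ?_⟩ <;> grind
  · fin_cases r <;> simp at hd <;> obtain ⟨h0, ⟨rfl, rfl⟩, h0'⟩ := hd <;>
      refine ⟨?_, ?_, ?_⟩ <;> grind

theorem inv₁_of_mem_RC {c : Config sys₁} (hc : c ∈ RC sys₁) : Inv₁ c :=
  invariant_of_mem_RC Inv₁ ⟨by simp [CS.initConfig], by simp [CS.initConfig], rfl⟩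
    (fun _ _ => Inv₁.step) hc

theorem h₁_sends_a (q : Bool) : (q, ⟨0, 1, .out, .a⟩, q) ∈ sys₁.delta 0 := by
  cases q <;> simp

theorem lockFree_sys₁ : LockFree sys₁ := by
  refine lockFree_of_canAct fun c hc p hrecv => ?_
  obtain ⟨h01, h02, hlen⟩ := inv₁_of_mem_RC hc
  match p, hrecv with
  | 0, ⟨_, hinp⟩ => cases hinp _ _ (h₁_sends_a (c.st 0))
  | 1, ⟨⟨l, q', hl⟩, _⟩ =>
    simp only [sys₁, Set.mem_singleton_iff, Prod.mk.injEq] at hl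
    refine canAct_of_send_receive (by decide) (h₁_sends_a (c.st 0)) fun x hx => ⟨false, ?_⟩
    obtain rfl : x = .a := by simp at hx; grind
    simp [hl.1]
  | 2, ⟨⟨l, q', hl⟩, _⟩ =>
    simp only [sys₁, Set.mem_singleton_iff, Prod.mk.injEq] at hl
    cases h0 : c.st 0
    · refine canAct_of_send_receive (s := 0) (m := .c) (q := true) (by decide) (by simp [h0])
        fun x hx => ⟨true, ?_⟩
      obtain rfl : x = .c := by simp at hx; grind
      simp [hl.1]
    · obtain ⟨x, w, hw⟩ := List.exists_cons_of_length_eq_add_one (n := 0) (by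
        simpa [hl.1, h0] using hlen)
      refine canAct_of_receive hw (q := true) ?_
      simp [hl.1, h02 x (by simp [hw])]

def Inv₂ (c : Config sys₂) : Prop :=
  (∀ x ∈ c.ch 1 0, x = .a) ∧ c.st 1 = false

theorem Inv₂.step {c c' : Config sys₂} (hc : Inv₂ c) (hs : Step sys₂ c c') : Inv₂ c' := by
  obtain ⟨h10, h1⟩ := hc
  obtain ⟨⟨s, r, dir, m⟩, hl⟩ := hs
  cases dir <;> obtain ⟨hd, hst, hch, hoth⟩ := hl <;> simp only at hd hst hch hoth
  · fin_cases s <;> simp at hd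
    obtain ⟨h0, ⟨rfl, rfl⟩, h0'⟩ := hd
    constructor <;> grind
  · fin_cases r <;> simp at hd
    rcases hd with ⟨h0, ⟨rfl, rfl⟩, h0'⟩ | ⟨h0, ⟨rfl, rfl⟩, h0'⟩ | ⟨h0, ⟨rfl, rfl⟩, h0'⟩ <;>
      constructor <;> grind

theorem inv₂_of_mem_RC {c : Config sys₂} (hc : c ∈ RC sys₂) : Inv₂ c :=
  invariant_of_mem_RC Inv₂ ⟨by simp [CS.initConfig], rfl⟩ (fun _ _ => Inv₂.step) hc

theorem h₂_receives_a (q : Bool) : (q, ⟨1, 0, .inp, .a⟩, q) ∈ sys₂.delta 0 := by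
  cases q <;> simp

theorem lockFree_sys₂ : LockFree sys₂ := by
  refine lockFree_of_canAct fun c hc p hrecv => ?_
  obtain ⟨h10, h1⟩ := inv₂_of_mem_RC hc
  match p, hrecv with
  | 0, _ =>
    refine canAct_of_send_receive (s := 1) (m := .a) (q := false) (by decide) (by simp [h1])
      fun x hx => ⟨c.st 0, ?_⟩
    obtain rfl : x = .a := by simp at hx; grind
    exact h₂_receives_a _
  | 1, ⟨_, hinp⟩ => cases hinp ⟨1, 0, .out, .a⟩ false (by simp [h1])
  | 2, ⟨⟨_, _, hl⟩, _⟩ => exact hl.elim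

theorem policy_false : policy false =
    {(false, ⟨true, false, .inp, .a⟩, false), (false, ⟨true, false, .inp, .c⟩, true),
      (true, ⟨true, false, .inp, .a⟩, true)} := by
  ext ⟨q, l, q'⟩
  simp [pairPolicy, exists_or]

theorem policy_true : policy true =
    {(false, ⟨true, false, .out, .a⟩, false), (false, ⟨true, false, .out, .c⟩, true),
      (true, ⟨true, false, .out, .a⟩, true)} := by
  ext ⟨q, l, q'⟩
  simp [pairPolicy, exists_or]

abbrev policySys := policyCS sys iface policy

/-- `k₂` sends `c` at most once, and then it is in the channel to `k₁` or has been received. -/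
def InvK (c : Config policySys) : Prop :=
  (c.ch true false).count .c + Bool.toNat (c.st false) = Bool.toNat (c.st true)

theorem InvK.step {c c' : Config policySys} (hc : InvK c) (hs : Step policySys c c') :
    InvK c' := by
  obtain ⟨⟨s, r, dir, m⟩, hl⟩ := hs
  unfold InvK at hc ⊢
  cases dir <;> obtain ⟨hd, hst, hch, hoth⟩ := hl <;> simp only at hd hst hch hoth
  · cases s <;> change _ ∈ policy _ at hd <;> simp only [policy_false, policy_true] at hd <;>
      rcases hd with h | h | (h : _ = _) <;> grind
  · cases r <;> change _ ∈ policy _ at hd <;> simp only [policy_false, policy_true] at hd <;>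
      rcases hd with h | h | (h : _ = _) <;> grind

theorem invK_of_mem_RC {c : Config policySys} (hc : c ∈ RC policySys) : InvK c :=
  invariant_of_mem_RC InvK rfl (fun _ _ => InvK.step) hc

theorem policy_true_sends_a (q : Bool) : (q, ⟨true, false, .out, .a⟩, q) ∈ policy true := by
  rw [policy_true]
  cases q <;> simp

theorem lockFree_policySys : LockFree policySys := by
  refine lockFree_of_canAct fun c hc p hrecv => ?_
  cases p
  · refine canAct_of_send_receive (by decide) (policy_true_sends_a (c.st true)) fun x hx => ?_
    change ∃ q', (c.st false, _, q') ∈ policy false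
    rw [policy_false]
    cases hq : c.st false
    · cases x
      · exact ⟨false, .inl rfl⟩
      · exact ⟨true, .inr (.inl rfl)⟩
    · have hcount : (c.ch true false).count .c = 0 := by
        have hinv := invK_of_mem_RC hc
        rw [InvK, hq, Bool.toNat_true] at hinv
        have := Bool.toNat_le (c.st true)
        omega
      obtain rfl : x = .a := by
        rcases List.mem_append.1 hx with hx | hx
        · cases x
          · rfl
          · exact absurd hx (List.count_eq_zero.1 hcount)
        · simpa using hx
      exact ⟨true, .inr (.inr rfl)⟩
  · cases hrecv.2 _ _ (policy_true_sends_a (c.st true))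

theorem only_interfaces_send_c (i : Bool) (p : Fin 3) (hp : p ≠ iface i) (q : (sys i).St p)
    (l : Act (Fin 3) Msg) (q' : (sys i).St p) (h : (q, l, q') ∈ (sys i).delta p)
    (hout : l.dir = .out) : l.msg ≠ .c := by
  cases i <;> fin_cases p <;> simp at hp h <;> obtain ⟨-, rfl, -⟩ := h <;> simp_all

theorem lockFree_sys : ∀ b, LockFree (sys b)
  | false => lockFree_sys₁
  | true => lockFree_sys₂

theorem finite_sys_St : ∀ b p, Finite ((sys b).St p)
  | false, _ => inferInstanceAs (Finite Bool)
  | true, _ => inferInstanceAs (Finite Bool)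

theorem MC_init_pLockConfig_w :
    PLockConfig (MC sys iface policy) (MC sys iface policy).initConfig ⟨false, 2⟩ := by
  have hw : (2 : Fin 3) ≠ iface false := by decide
  refine pLockConfig_of_input_never_buffered (m := .c) ?_ (fun q l q' h => ?_)
    fun c hc => (notInTransit_of_mem_RC only_interfaces_send_c hc).1
  · refine receivingSt_MC_of_ne sys iface policy hw ?_
    rw [CS.initConfig, toLoc_MC_init]
    refine ⟨⟨⟨0, 2, .inp, .c⟩, true, rfl⟩, fun l q' h => ?_⟩
    cases h
    rfl
  · obtain ⟨l₀, hmem, rfl⟩ := (mem_MC_delta_of_ne sys iface policy hw _ _ _).1 h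
    obtain ⟨-, h₂⟩ := Prod.mk.inj hmem
    obtain rfl := (Prod.mk.inj h₂).1
    exact ⟨rfl, rfl⟩

end LockCounterexample

end CFSM

open CFSM in
/-- lock-freeness is not preserved by PaI multicomposition, even when
the interfaces have no mixed states. -/
theorem lockFree_not_preserved :
    ∃ (P : Bool → Type) (A : Type) (S : ∀ b, CS (P b) A) (hh : ∀ b, P b)
      (CM : Set (Bool × A × Bool))
      (Kd : ∀ b, Set ((S b).St (hh b) × Act Bool A × (S b).St (hh b))),
      (∀ b, Finite (P b)) ∧ Finite A ∧ (∀ b p, Finite ((S b).St p)) ∧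
      (∀ b, (S b).WellFormed) ∧
      (∀ b, NoMixed ((S b).delta (hh b))) ∧
      IsConnModel S hh CM ∧
      IsConnPolicy S hh CM Kd ∧
      (∀ b, LockFree (S b)) ∧
      LockFree (policyCS S hh Kd) ∧
      (∃ r, PLockConfig (MC S hh Kd) (MC S hh Kd).initConfig r) ∧
      ¬ LockFree (MC S hh Kd) := by
  open LockCounterexample in
  exact ⟨fun _ => Fin 3, Msg, sys, iface, connModel, policy, fun _ => inferInstance,
    inferInstance, finite_sys_St, sys_wellFormed, sys_noMixed, isConnModel, isConnPolicy,
    lockFree_sys, lockFree_policySys, ⟨_, MC_init_pLockConfig_w⟩,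
    fun h => h _ .refl _ MC_init_pLockConfig_w⟩
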